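/- arXiv:1501.06675 — 2 statements merged into one kernel-verified Lean document; each statement's English description precedes it below -/
import Mathlib

section
/- Let q > 0 and let u : [0,1] → ℝ be a twice continuously differentiable solution of u'' + q·e^u = 0 on [0,1] with u'(0) = 0 and u(1) = 0. Then there exists μ > 0 with cosh(μ) = √(2/q)·μ such that u(x) = ln(2μ²/q) − 2·ln(cosh(μx)) for all x ∈ [0,1]. -/
/-!
Multiplying the equation by `u'` gives the first integral `u'² + 2q·eᵘ = 4μ²`, where
`μ² = q·e^{u(0)}/2` because `u'(0) = 0`. With it, `w = e^{-u/2}` satisfies the linear equation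
`w'' = μ² w`; the Wronskian of `w` and `cosh (μ·)` is constant and vanishes at `0`, so
`w = w(0) cosh (μ·)`. Taking logarithms gives the formula for `u`, and `u(1) = 0` turns into
`cosh μ = e^{u(0)/2} = √(2/q)·μ`.
-/

open Real Set

theorem eq_of_hasDerivWithinAt_zero_Icc {E : Type*} [NormedAddCommGroup E] [NormedSpace ℝ E]
    {f : ℝ → E} {a b : ℝ} (hf : ∀ x ∈ Icc a b, HasDerivWithinAt f 0 (Icc a b) x) :
    ∀ x ∈ Icc a b, f x = f a :=
  constant_of_has_deriv_right_zero (fun x hx => (hf x hx).continuousWithinAt)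
    fun x hx => (hf x (mem_Icc_of_Ico hx)).mono_of_mem_nhdsWithin (Icc_mem_nhdsGE_of_mem hx)

theorem energy_eq_of_hasDerivWithinAt {u u' : ℝ → ℝ} {q a b : ℝ}
    (hu : ∀ x ∈ Icc a b, HasDerivWithinAt u (u' x) (Icc a b) x)
    (hu' : ∀ x ∈ Icc a b, HasDerivWithinAt u' (-(q * exp (u x))) (Icc a b) x) :
    ∀ x ∈ Icc a b, u' x ^ 2 + 2 * q * exp (u x) = u' a ^ 2 + 2 * q * exp (u a) :=
  eq_of_hasDerivWithinAt_zero_Icc fun x hx =>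
    (((hu' x hx).pow 2).add (((hu x hx).exp).const_mul (2 * q))).congr_deriv (by ring)

theorem hasDerivWithinAt_neg_half_mul_exp_neg_half_of_energy_eq {u u' : ℝ → ℝ} {q c x : ℝ}
    {s : Set ℝ} (hu : HasDerivWithinAt u (u' x) s x)
    (hu' : HasDerivWithinAt u' (-(q * exp (u x))) s x)
    (hE : u' x ^ 2 + 2 * q * exp (u x) = 4 * c) :
    HasDerivWithinAt (fun y => -(u' y / 2) * exp (-u y / 2)) (c * exp (-u x / 2)) s x := by
  refine ((hu'.div_const 2).neg.mul (hu.neg.div_const 2).exp).congr_deriv ?_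
  simp only [Pi.neg_apply]
  linear_combination (exp (-u x / 2) / 4) * hE

theorem eq_mul_cosh_of_hasDerivWithinAt {w w' : ℝ → ℝ} {μ b : ℝ}
    (hw : ∀ x ∈ Icc 0 b, HasDerivWithinAt w (w' x) (Icc 0 b) x)
    (hw' : ∀ x ∈ Icc 0 b, HasDerivWithinAt w' (μ ^ 2 * w x) (Icc 0 b) x)
    (h0 : w' 0 = 0) : ∀ x ∈ Icc 0 b, w x = w 0 * cosh (μ * x) := by
  have hcosh : ∀ x, HasDerivAt (fun y => cosh (μ * y)) (sinh (μ * x) * μ) x := fun x =>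
    ((hasDerivAt_id x).const_mul μ).cosh.congr_deriv (by simp)
  have hsinh : ∀ x, HasDerivAt (fun y => sinh (μ * y)) (cosh (μ * x) * μ) x := fun x =>
    ((hasDerivAt_id x).const_mul μ).sinh.congr_deriv (by simp)
  have wronskian : ∀ x ∈ Icc 0 b,
      w' x * cosh (μ * x) - μ * w x * sinh (μ * x) = 0 := by
    intro x hx
    have h := eq_of_hasDerivWithinAt_zero_Icc
      (f := fun x => w' x * cosh (μ * x) - μ * w x * sinh (μ * x)) (fun x hx =>
        (((hw' x hx).mul (hcosh x).hasDerivWithinAt).sub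
          (((hw x hx).const_mul μ).mul (hsinh x).hasDerivWithinAt)).congr_deriv (by ring)) x hx
    simpa [h0] using h
  have hquot := eq_of_hasDerivWithinAt_zero_Icc (f := fun x => w x / cosh (μ * x)) (fun x hx =>
      ((hw x hx).div (hcosh x).hasDerivWithinAt (cosh_pos _).ne').congr_deriv
        (div_eq_zero_iff.2 (Or.inl (by linear_combination wronskian x hx))))
  intro x hx
  have h := hquot x hx
  simp only [mul_zero, cosh_zero, div_one] at h
  rw [← h, div_mul_cancel₀ _ (cosh_pos _).ne']

theorem eq_sub_two_log_cosh_of_hasDerivWithinAt {u u' : ℝ → ℝ} {q b : ℝ} (hq : 0 ≤ q)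
    (hu : ∀ x ∈ Icc 0 b, HasDerivWithinAt u (u' x) (Icc 0 b) x)
    (hu' : ∀ x ∈ Icc 0 b, HasDerivWithinAt u' (-(q * exp (u x))) (Icc 0 b) x) (h0 : u' 0 = 0) :
    ∀ x ∈ Icc 0 b, u x = u 0 - 2 * log (cosh (sqrt (q * exp (u 0) / 2) * x)) := by
  set μ := sqrt (q * exp (u 0) / 2)
  have henergy : ∀ x ∈ Icc 0 b, u' x ^ 2 + 2 * q * exp (u x) = 4 * μ ^ 2 := fun x hx => by
    rw [energy_eq_of_hasDerivWithinAt hu hu' x hx, h0, sq_sqrt (by positivity)]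
    ring
  have hw : ∀ x ∈ Icc 0 b, exp (-u x / 2) = exp (-u 0 / 2) * cosh (μ * x) :=
    eq_mul_cosh_of_hasDerivWithinAt (w' := fun y => -(u' y / 2) * exp (-u y / 2))
      (fun x hx => ((hu x hx).neg.div_const 2).exp.congr_deriv
        (by simp only [Pi.neg_apply]; ring))
      (fun x hx => hasDerivWithinAt_neg_half_mul_exp_neg_half_of_energy_eq (hu x hx) (hu' x hx)
        (henergy x hx))
      (by simp [h0])
  intro x hx
  have h := congrArg log (hw x hx)
  rw [log_exp, log_mul (exp_ne_zero _) (cosh_pos _).ne', log_exp] at h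
  linarith

/-- Any twice continuously differentiable solution of the BVP
`u'' + q·e^u = 0` on `[0,1]`, `u'(0) = 0`, `u(1) = 0` (with `q > 0`) has the form
`u(x) = ln(2μ²/q) − 2·ln(cosh(μx))` for some `μ > 0` with `cosh μ = √(2/q)·μ`. -/
theorem thermal_explosion_solution_form (q : ℝ) (hq : 0 < q) (u : ℝ → ℝ)
    (hu : ContDiffOn ℝ 2 u (Set.Icc 0 1))
    (heq : ∀ x ∈ Set.Icc (0 : ℝ) 1,
      derivWithin (derivWithin u (Set.Icc 0 1)) (Set.Icc 0 1) x + q * Real.exp (u x) = 0)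
    (hbc0 : derivWithin u (Set.Icc 0 1) 0 = 0)
    (hbc1 : u 1 = 0) :
    ∃ μ : ℝ, 0 < μ ∧ Real.cosh μ = Real.sqrt (2 / q) * μ ∧
      ∀ x ∈ Set.Icc (0 : ℝ) 1,
        u x = Real.log (2 * μ ^ 2 / q) - 2 * Real.log (Real.cosh (μ * x)) := by
  have hu_deriv : ∀ x ∈ Icc (0 : ℝ) 1,
      HasDerivWithinAt u (derivWithin u (Icc 0 1) x) (Icc 0 1) x := fun x hx =>
    (hu.differentiableOn two_ne_zero x hx).hasDerivWithinAt
  have hu'_deriv : ∀ x ∈ Icc (0 : ℝ) 1,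
      HasDerivWithinAt (derivWithin u (Icc 0 1)) (-(q * exp (u x))) (Icc 0 1) x := fun x hx => by
    rw [← eq_neg_of_add_eq_zero_left (heq x hx)]
    exact ((hu.derivWithin (uniqueDiffOn_Icc one_pos) le_rfl).differentiableOn one_ne_zero x
      hx).hasDerivWithinAt
  have hform := eq_sub_two_log_cosh_of_hasDerivWithinAt hq.le hu_deriv hu'_deriv hbc0
  set μ := sqrt (q * exp (u 0) / 2)
  have hμ : 0 < μ := sqrt_pos.2 (by positivity)
  have hμ_sq : μ ^ 2 = q * exp (u 0) / 2 := sq_sqrt (by positivity)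
  have hu0 : u 0 = log (2 * μ ^ 2 / q) := by
    rw [hμ_sq, mul_div_cancel₀ _ two_ne_zero, mul_div_cancel_left₀ _ hq.ne', log_exp]
  have hcosh : cosh μ = exp (u 0 / 2) := by
    have h := hform 1 (right_mem_Icc.2 zero_le_one)
    rw [hbc1, mul_one] at h
    rw [← exp_log (cosh_pos μ)]
    congr 1
    linarith
  have hsq : 2 / q * μ ^ 2 = exp (u 0 / 2) ^ 2 := by
    rw [hμ_sq, ← exp_nat_mul]
    field_simp
    norm_num
  refine ⟨μ, hμ, ?_, fun x hx => hu0 ▸ hform x hx⟩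
  rw [hcosh, ← sqrt_sq hμ.le, ← sqrt_mul (by positivity), hsq, sqrt_sq (exp_pos _).le]
end

section
/- There exists a threshold value q* > 0 (namely q* = sup over μ > 0 of 2μ²/cosh²(μ), which is attained) such that for every q > 0: there exists μ > 0 with cosh(μ) = √(2/q)·μ if and only if q ≤ q*. In particular, for q > q* the matching condition cosh(μ) = √(2/q)·μ has no positive solution μ, i.e. the analytic solution of the one-dimensional thermal explosion model ceases to exist. -/
open Real

private lemma cosh_ge_half_sq (x : ℝ) (hx : 0 ≤ x) : x ^ 2 / 2 ≤ Real.cosh x := by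
  have h : Real.cosh x = Real.cosh (x/2) ^ 2 + Real.sinh (x/2) ^ 2 := by
    rw [← Real.cosh_two_mul]; ring_nf
  have h2 : x / 2 ≤ Real.sinh (x/2) := Real.self_le_sinh_iff.2 (by linarith)
  have h3 : (x/2)^2 ≤ Real.sinh (x/2)^2 := by
    apply pow_le_pow_left₀ (by linarith) h2
  have h4 : Real.cosh (x/2) ^ 2 = Real.sinh (x/2) ^ 2 + 1 := Real.cosh_sq _
  nlinarith [sq_nonneg x]

/-- There is a threshold `q* > 0`, namely the (attained) supremum of
`2μ²/cosh²(μ)` over `μ > 0`, such that for every `q > 0` the matching condition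
`cosh μ = √(2/q)·μ` has a positive solution `μ` iff `q ≤ q*`; in particular for
`q > q*` no positive solution exists. -/
theorem thermal_explosion_threshold :
    ∃ qs : ℝ, 0 < qs ∧
      qs = sSup ((fun μ : ℝ => 2 * μ ^ 2 / Real.cosh μ ^ 2) '' Set.Ioi 0) ∧
      (∃ μ : ℝ, 0 < μ ∧ 2 * μ ^ 2 / Real.cosh μ ^ 2 = qs) ∧
      (∀ q : ℝ, 0 < q →
        ((∃ μ : ℝ, 0 < μ ∧ Real.cosh μ = Real.sqrt (2 / q) * μ) ↔ q ≤ qs)) ∧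
      (∀ q : ℝ, qs < q →
        ¬ ∃ μ : ℝ, 0 < μ ∧ Real.cosh μ = Real.sqrt (2 / q) * μ) := by
  set f : ℝ → ℝ := fun μ => 2 * μ ^ 2 / Real.cosh μ ^ 2 with hf
  have hcont : Continuous f := by
    apply Continuous.div (by continuity) (by continuity)
    intro x; exact pow_ne_zero _ (Real.cosh_pos x).ne'
  -- f 1 ≥ 1/2
  have hcosh1 : Real.cosh 1 ≤ 2 := by
    rw [Real.cosh_eq]
    have h1 : Real.exp 1 < 3 := by
      have := Real.exp_one_lt_d9; linarith
    have h2 : Real.exp (-1) ≤ 1 := by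
      rw [Real.exp_le_one_iff]; norm_num
    linarith
  have hf1 : (1:ℝ)/2 ≤ f 1 := by
    rw [hf]; simp only
    rw [le_div_iff₀ (by positivity)]
    nlinarith [Real.cosh_pos 1]
  -- max on [0,4]
  obtain ⟨μ₀, hμ₀mem, hmax⟩ := (isCompact_Icc (a := (0:ℝ)) (b := 4)).exists_isMaxOn
    (Set.nonempty_Icc.2 (by norm_num)) hcont.continuousOn
  have h1mem : (1:ℝ) ∈ Set.Icc (0:ℝ) 4 := by norm_num
  have hq1 : (1:ℝ)/2 ≤ f μ₀ := le_trans hf1 (hmax h1mem)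
  have hμ₀pos : 0 < μ₀ := by
    rcases hμ₀mem.1.lt_or_eq with h | h
    · exact h
    · exfalso; rw [← h] at hq1; simp [hf] at hq1; linarith
  -- bound outside [0,4]
  have hbig : ∀ x : ℝ, 4 < x → f x ≤ 1/2 := by
    intro x hx
    have hx0 : (0:ℝ) ≤ x := by linarith
    have hc : x^2/2 ≤ Real.cosh x := cosh_ge_half_sq x hx0
    have hc2 : (x^2/2)^2 ≤ Real.cosh x ^ 2 := pow_le_pow_left₀ (by positivity) hc 2
    rw [hf]; simp only
    rw [div_le_iff₀ (by positivity)]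
    nlinarith [sq_nonneg x, sq_nonneg (x^2 - 16)]
  have hub : ∀ μ : ℝ, 0 < μ → f μ ≤ f μ₀ := by
    intro μ hμ
    by_cases h : μ ≤ 4
    · exact hmax ⟨hμ.le, h⟩
    · exact le_trans (hbig μ (lt_of_not_ge h)) hq1
  set qs := f μ₀ with hqs
  have hqspos : 0 < qs := lt_of_lt_of_le (by norm_num) hq1
  -- key: for q>0, (∃μ>0, f μ = q) ↔ q ≤ qs
  have hkey : ∀ q : ℝ, 0 < q → ((∃ μ : ℝ, 0 < μ ∧ f μ = q) ↔ q ≤ qs) := by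
    intro q hq
    constructor
    · rintro ⟨μ, hμ, hfq⟩; rw [← hfq]; exact hub μ hμ
    · intro hle
      have h0 : f 0 = 0 := by simp [hf]
      have : q ∈ Set.Icc (f 0) (f μ₀) := by rw [h0]; exact ⟨hq.le, hle⟩
      obtain ⟨x, hxmem, hxq⟩ := intermediate_value_Icc hμ₀pos.le hcont.continuousOn this
      refine ⟨x, ?_, hxq⟩
      rcases hxmem.1.lt_or_eq with h | h
      · exact h
      · exfalso; rw [← h, h0] at hxq; linarith
  -- matching condition ↔ f μ = q
  have hmatch : ∀ q : ℝ, 0 < q → ∀ μ : ℝ, 0 < μ →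
      (Real.cosh μ = Real.sqrt (2 / q) * μ ↔ f μ = q) := by
    intro q hq μ hμ
    have hcpos := Real.cosh_pos μ
    have hsq : Real.sqrt (2/q) ^ 2 = 2/q := Real.sq_sqrt (by positivity)
    constructor
    · intro h
      have : Real.cosh μ ^ 2 = (2/q) * μ ^ 2 := by rw [h, mul_pow, hsq]
      rw [hf]; simp only
      rw [this]; field_simp
    · intro h
      have hc2 : Real.cosh μ ^ 2 = (2/q) * μ ^ 2 := by
        rw [hf] at h; simp only at h
        field_simp at h ⊢
        nlinarith [Real.cosh_pos μ]
      have h1 : Real.cosh μ = Real.sqrt (Real.cosh μ ^ 2) := by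
        rw [Real.sqrt_sq hcpos.le]
      rw [h1, hc2, Real.sqrt_mul (by positivity), Real.sqrt_sq hμ.le]
  -- sSup equality
  have himg : qs ∈ f '' Set.Ioi 0 := ⟨μ₀, hμ₀pos, rfl⟩
  have hsup : qs = sSup (f '' Set.Ioi 0) := by
    apply le_antisymm
    · exact le_csSup ⟨qs, by rintro y ⟨μ, hμ, rfl⟩; exact hub μ hμ⟩ himg
    · exact csSup_le ⟨qs, himg⟩ (by rintro y ⟨μ, hμ, rfl⟩; exact hub μ hμ)
  refine ⟨qs, hqspos, hsup, ⟨μ₀, hμ₀pos, rfl⟩, ?_, ?_⟩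
  · intro q hq
    rw [← hkey q hq]
    exact exists_congr fun μ => and_congr_right fun hμ => hmatch q hq μ hμ
  · intro q hlt ⟨μ, hμ, hcosh⟩
    have hq : 0 < q := lt_trans hqspos hlt
    have := ((hkey q hq).1 ⟨μ, hμ, (hmatch q hq μ hμ).1 hcosh⟩)
    linarith
end
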